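/- arXiv:2509.15404 — 2 statements merged into one kernel-verified Lean document; each statement's English description precedes it below -/
import Mathlib

section
/- With collision penalty r > 0 and prior λ = p₀(Go) ∈ (0,1), and utilities u(Go,DR) = -r, u(Stop,DR) = 1, u(Go,DC) = 0, u(Stop,DC) = -1, the minimum persuadable trust threshold (for persuading from default DR to DC using the fully revealing signal for Go) is θ* = (2(1-λ) - rλ) / ((1-λ)(r+2)). Precisely, for θ ∈ [0,1], the expected utility of DC is at least that of DR under the belief (1-θ)·(λ, 1-λ) + θ·(1, 0) if and only if θ ≥ θ*. -/
lemma utility_gap_eq (lam r θ : ℝ) :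
    (((1 - θ) * lam + θ) * 0 + ((1 - θ) * (1 - lam)) * (-1)) -
        (((1 - θ) * lam + θ) * (-r) + ((1 - θ) * (1 - lam)) * 1) =
      θ * ((1 - lam) * (r + 2)) - (2 * (1 - lam) - r * lam) := by
  ring

theorem stmt_3_general (lam r θ : ℝ) (hr : 0 < r) (hlam : lam ∈ Set.Ioo (0:ℝ) 1) :
    (((1 - θ) * lam + θ) * 0 + ((1 - θ) * (1 - lam)) * (-1) ≥
       ((1 - θ) * lam + θ) * (-r) + ((1 - θ) * (1 - lam)) * 1) ↔
    θ ≥ (2 * (1 - lam) - r * lam) / ((1 - lam) * (r + 2)) := by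
  have slope_pos : 0 < (1 - lam) * (r + 2) := mul_pos (sub_pos.2 hlam.2) (by linarith)
  rw [ge_iff_le, ← sub_nonneg, utility_gap_eq, sub_nonneg, ge_iff_le, div_le_iff₀ slope_pos]

/-- in the AV-HV model with utilities u(Go,DR) = -r, u(Stop,DR) = 1,
u(Go,DC) = 0, u(Stop,DC) = -1, for θ ∈ [0,1] the expected utility of DC is at least that
of DR under the belief (1-θ)·(λ, 1-λ) + θ·(1, 0) iff θ ≥ θ* = (2(1-λ) - rλ)/((1-λ)(r+2)). -/
theorem stmt_3 (lam r θ : ℝ) (hr : 0 < r) (hlam : lam ∈ Set.Ioo (0:ℝ) 1)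
    (hθ : θ ∈ Set.Icc (0:ℝ) 1) :
    (((1 - θ) * lam + θ) * 0 + ((1 - θ) * (1 - lam)) * (-1) ≥
       ((1 - θ) * lam + θ) * (-r) + ((1 - θ) * (1 - lam)) * 1) ↔
    θ ≥ (2 * (1 - lam) - r * lam) / ((1 - lam) * (r + 2)) :=
  stmt_3_general lam r θ hr hlam
end

section
/- If θ < θ* where θ* = (-ΔU₀)/(M - ΔU₀) with ΔU₀ := U(a₁|p₀) - U(a₂|p₀) < 0 and M := sup over posteriors q ∈ Δ(Ω) of (U(a₁|q) - U(a₂|q)) > 0, then for every posterior q ∈ Δ(Ω) the trust-aware belief (1-θ)p₀ + θq strictly prefers a₂: U(a₂ | (1-θ)p₀ + θq) > U(a₁ | (1-θ)p₀ + θq). -/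
/-- Expected utility of action `a` under belief `p`. -/
noncomputable def expUtil {Ω A : Type*} [Fintype Ω] (u : Ω → A → ℝ) (p : Ω → ℝ) (a : A) : ℝ :=
  ∑ ω, p ω * u ω a

lemma expUtil_mix {Ω A : Type*} [Fintype Ω] (u : Ω → A → ℝ) (p q : Ω → ℝ) (θ : ℝ) (a : A) :
    expUtil u (fun ω => (1 - θ) * p ω + θ * q ω) a
      = (1 - θ) * expUtil u p a + θ * expUtil u q a := by
  simp only [expUtil, Finset.mul_sum, ← Finset.sum_add_distrib]
  exact Finset.sum_congr rfl fun ω _ => by ring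

lemma mix_neg_of_lt_threshold {d₀ d M θ : ℝ} (hθ : 0 ≤ θ) (hd : d ≤ M) (hden : 0 < M - d₀)
    (hlt : θ < -d₀ / (M - d₀)) :
    (1 - θ) * d₀ + θ * d < 0 := by
  have hθM : θ * (M - d₀) < -d₀ := (lt_div_iff₀ hden).mp hlt
  nlinarith [mul_le_mul_of_nonneg_left hd hθ]

theorem stmt_18_general {Ω A : Type*} [Fintype Ω]
    (p₀ : Ω → ℝ)
    (u : Ω → A → ℝ) (a₁ a₂ : A)
    (ΔU₀ M : ℝ)
    (hΔU₀ : ΔU₀ = expUtil u p₀ a₁ - expUtil u p₀ a₂) (hΔU₀neg : ΔU₀ < 0)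
    (hM : IsLUB {x : ℝ | ∃ q : Ω → ℝ, (∀ ω, 0 ≤ q ω) ∧ (∑ ω, q ω = 1) ∧
      x = expUtil u q a₁ - expUtil u q a₂} M)
    (hMpos : 0 < M)
    (θ : ℝ) (hθ : θ ∈ Set.Icc (0:ℝ) 1) (hlt : θ < (-ΔU₀) / (M - ΔU₀)) :
    ∀ q : Ω → ℝ, (∀ ω, 0 ≤ q ω) → (∑ ω, q ω = 1) →
      expUtil u (fun ω => (1 - θ) * p₀ ω + θ * q ω) a₂ >
      expUtil u (fun ω => (1 - θ) * p₀ ω + θ * q ω) a₁ := by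
  intro q hq hqs
  have hle_M : expUtil u q a₁ - expUtil u q a₂ ≤ M := hM.1 ⟨q, hq, hqs, rfl⟩
  have hmix := mix_neg_of_lt_threshold hθ.1 hle_M (by linarith) hlt
  subst hΔU₀
  rw [expUtil_mix, expUtil_mix]
  linarith

/-- if `θ < θ* = (-ΔU₀)/(M - ΔU₀)` where `ΔU₀ = U(a₁|p₀) - U(a₂|p₀) < 0` and
`M = sup over posteriors q of (U(a₁|q) - U(a₂|q)) = max_ω (u(ω,a₁) - u(ω,a₂)) > 0`, then for
every posterior `q` the trust-aware belief `(1-θ)p₀ + θq` strictly prefers `a₂`. -/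
theorem stmt_18 {Ω A : Type*} [Fintype Ω] [Nonempty Ω]
    (p₀ : Ω → ℝ) (hpos : ∀ ω, 0 < p₀ ω) (hsum : ∑ ω, p₀ ω = 1)
    (u : Ω → A → ℝ) (a₁ a₂ : A)
    (ΔU₀ M : ℝ)
    (hΔU₀ : ΔU₀ = expUtil u p₀ a₁ - expUtil u p₀ a₂) (hΔU₀neg : ΔU₀ < 0)
    (hM : IsLUB {x : ℝ | ∃ q : Ω → ℝ, (∀ ω, 0 ≤ q ω) ∧ (∑ ω, q ω = 1) ∧
      x = expUtil u q a₁ - expUtil u q a₂} M)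
    (hMpos : 0 < M)
    (θ : ℝ) (hθ : θ ∈ Set.Icc (0:ℝ) 1) (hlt : θ < (-ΔU₀) / (M - ΔU₀)) :
    ∀ q : Ω → ℝ, (∀ ω, 0 ≤ q ω) → (∑ ω, q ω = 1) →
      expUtil u (fun ω => (1 - θ) * p₀ ω + θ * q ω) a₂ >
      expUtil u (fun ω => (1 - θ) * p₀ ω + θ * q ω) a₁ :=
  stmt_18_general p₀ u a₁ a₂ ΔU₀ M hΔU₀ hΔU₀neg hM hMpos θ hθ hlt
end
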